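/- Let R be a B-complete TRS, let Ṙ be obtained from R by replacing each right-hand side by some →R/B-normal form of it and keeping only one representative of each class of right-B-equivalent variants, and let R̈ consist of those rules ℓ→r of Ṙ whose left-hand side ℓ is a normal form of Ṙ∖{ℓ→r}. Then R̈ is canonical modulo B, and it is both normalization equivalent modulo B and conversion equivalent modulo B to R. -/

import Mathlib

/-- First-order terms over a signature `F` with natural-number variables. -/
inductive Tm (F : Type) : Type
  | var : Nat → Tm F
  | fn  : F → List (Tm F) → Tm F

namespace Tm

variable {F : Type}

mutual
def subst (σ : Nat → Tm F) : Tm F → Tm F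
  | .var n => σ n
  | .fn f ts => .fn f (substList σ ts)
def substList (σ : Nat → Tm F) : List (Tm F) → List (Tm F)
  | [] => []
  | t :: ts => subst σ t :: substList σ ts
end

mutual
def varsList : Tm F → List Nat
  | .var n => [n]
  | .fn _ ts => varsListL ts
def varsListL : List (Tm F) → List Nat
  | [] => []
  | t :: ts => varsList t ++ varsListL ts
end

/-- The set of variables of a term. -/
def vars (t : Tm F) : Set Nat := {n | n ∈ varsList t}

/-- A term is linear if no variable occurs more than once. -/
def Linear (t : Tm F) : Prop := (varsList t).Nodup

/-- The subterm at a given position (if the position exists). -/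
def subtermAt : Tm F → List Nat → Option (Tm F)
  | t, [] => some t
  | .var _, _ :: _ => none
  | .fn _ ts, i :: p =>
    match ts[i]? with
    | some u => subtermAt u p
    | none => none
  termination_by t p => p.length

/-- Replacement of the subterm at a given position. -/
def replaceAt : Tm F → List Nat → Tm F → Option (Tm F)
  | _, [], s => some s
  | .var _, _ :: _, _ => none
  | .fn f ts, i :: p, s =>
    match ts[i]? with
    | some u => (replaceAt u p s).map fun u' => .fn f (ts.set i u')
    | none => none
  termination_by t p _ => p.length

end Tm

open Tm

/-- A term rewrite system (or equational system): a set of pairs of terms. -/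
abbrev TRS (F : Type) := Set (Tm F × Tm F)

/-- Well-formedness of the rules: left-hand sides are not variables and
variables of right-hand sides occur on the left. -/
def IsTRS {F : Type} (R : TRS F) : Prop :=
  ∀ p ∈ R, (∀ n, p.1 ≠ .var n) ∧ vars p.2 ⊆ vars p.1

def LeftLinear {F : Type} (R : TRS F) : Prop := ∀ p ∈ R, Linear p.1

/-- One-step rewrite relation of a set of rules (closed under contexts and
substitutions). -/
def Rew {F : Type} (R : TRS F) (s t : Tm F) : Prop :=
  ∃ p l r σ, (l, r) ∈ R ∧ subtermAt s p = some (subst σ l) ∧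
    replaceAt s p (subst σ r) = some t

/-- Normal forms. -/
def NF {A : Type} (r : A → A → Prop) (a : A) : Prop := ∀ b, ¬ r a b

/-- The equational theory `∼B` generated by an ES `B`. -/
def simE {F : Type} (B : TRS F) : Tm F → Tm F → Prop :=
  Relation.EqvGen (Rew B)

/-- Rewriting modulo: `∼B · →R · ∼B`. -/
def RewMod {F : Type} (R B : TRS F) (s t : Tm F) : Prop :=
  ∃ s' t', simE B s s' ∧ Rew R s' t' ∧ simE B t' t

def Terminating {F : Type} (R : TRS F) : Prop :=
  WellFounded (fun a b => Rew R b a)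

def TerminatingMod {F : Type} (R B : TRS F) : Prop :=
  WellFounded (fun a b => RewMod R B b a)

/-- Conversion modulo `B`: arbitrary sequences of `→R`, `←R` and `∼B` steps. -/
def ConvMod {F : Type} (R B : TRS F) : Tm F → Tm F → Prop :=
  Relation.ReflTransGen (fun a b => Rew R a b ∨ Rew R b a ∨ simE B a b)

/-- Joinability modulo `B` using the plain rewrite relation:
`→R* · ∼B · ←R*`. -/
def JoinMod {F : Type} (R B : TRS F) (s t : Tm F) : Prop :=
  ∃ u v, Relation.ReflTransGen (Rew R) s u ∧ simE B u v ∧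
    Relation.ReflTransGen (Rew R) t v

def ChurchRosserMod {F : Type} (R B : TRS F) : Prop :=
  ∀ s t, ConvMod R B s t → JoinMod R B s t

def Joinable {F : Type} (R : TRS F) (s t : Tm F) : Prop :=
  ∃ v, Relation.ReflTransGen (Rew R) s v ∧ Relation.ReflTransGen (Rew R) t v

def Confluent {F : Type} (R : TRS F) : Prop :=
  ∀ s t u, Relation.ReflTransGen (Rew R) s t → Relation.ReflTransGen (Rew R) s u →
    Joinable R t u

/-- Renaming a term by a bijection on variables. -/
def rename {F : Type} (ρ : Nat ≃ Nat) (t : Tm F) : Tm F :=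
  subst (fun n => .var (ρ n)) t

def VariantTm {F : Type} (s t : Tm F) : Prop := ∃ ρ : Nat ≃ Nat, rename ρ s = t

def VariantRule {F : Type} (p q : Tm F × Tm F) : Prop :=
  ∃ ρ : Nat ≃ Nat, rename ρ p.1 = q.1 ∧ rename ρ p.2 = q.2

def Unifies {F : Type} (σ : Nat → Tm F) (s t : Tm F) : Prop := subst σ s = subst σ t

/-- Most general unifier. -/
def IsMGU {F : Type} (σ : Nat → Tm F) (s t : Tm F) : Prop :=
  Unifies σ s t ∧ ∀ τ, Unifies τ s t → ∃ δ, ∀ n, τ n = subst δ (σ n)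

/-- `CriticalPeak R₁ R₂ t p s u` : `t ←R₁[p] s →R₂[ε] u` is a critical peak
obtained from an overlap of variable-disjoint variants of rules of `R₁`
(inner rule) and `R₂` (root rule). -/
def CriticalPeak {F : Type} (R₁ R₂ : TRS F) (t : Tm F) (p : List Nat) (s u : Tm F) :
    Prop :=
  ∃ l₁ r₁ l₂ r₂ σ,
    (∃ q ∈ R₁, VariantRule q (l₁, r₁)) ∧
    (∃ q ∈ R₂, VariantRule q (l₂, r₂)) ∧
    (vars l₁ ∪ vars r₁) ∩ (vars l₂ ∪ vars r₂) = ∅ ∧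
    (∃ f ts, subtermAt l₂ p = some (.fn f ts) ∧ IsMGU σ l₁ (.fn f ts)) ∧
    (p = [] → ¬ VariantRule (l₁, r₁) (l₂, r₂)) ∧
    s = subst σ l₂ ∧
    replaceAt s p (subst σ r₁) = some t ∧
    u = subst σ r₂

/-- The set of critical pairs between `R₁` and `R₂`. -/
def CP {F : Type} (R₁ R₂ : TRS F) : Set (Tm F × Tm F) :=
  {tu | ∃ p s, CriticalPeak R₁ R₂ tu.1 p s tu.2}

/-- A critical peak `t ←[p] s →[ε] u` is prime (w.r.t. `R`) if all proper
subterms of `s|p` are in normal form w.r.t. `→R`. -/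
def PrimeAt {F : Type} (R : TRS F) (s : Tm F) (p : List Nat) : Prop :=
  ∀ q v, q ≠ [] → subtermAt s (p ++ q) = some v → NF (Rew R) v

/-- Prime critical pairs of a TRS. -/
def PCP {F : Type} (R : TRS F) : Set (Tm F × Tm F) :=
  {tu | ∃ p s, CriticalPeak R R tu.1 p s tu.2 ∧ PrimeAt R s p}

/-- `E ∪ E⁻¹`. -/
def sympm {F : Type} (E : TRS F) : TRS F :=
  E ∪ {q | ∃ p ∈ E, q = (p.2, p.1)}

/-- Prime critical pairs between `R` and `B^±` (in both directions), where
primality is always checked with respect to `→R`. -/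
def PCPpm {F : Type} (R B : TRS F) : Set (Tm F × Tm F) :=
  {tu | ∃ p s, (CriticalPeak R (sympm B) tu.1 p s tu.2 ∨
                CriticalPeak (sympm B) R tu.1 p s tu.2) ∧ PrimeAt R s p}

/-- `s` encompasses `t`: some subterm of `s` is an instance of `t`. -/
def Encompass {F : Type} (s t : Tm F) : Prop :=
  ∃ p w σ, subtermAt s p = some w ∧ w = subst σ t

/-- The strict part of encompassment: `⊳ = ⊵ ∖ ≐`. -/
def StrictEnc {F : Type} (s t : Tm F) : Prop :=
  Encompass s t ∧ ¬ VariantTm s t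

/-- Two rules are right-`B`-equivalent variants. -/
def REV {F : Type} (B : TRS F) (p q : Tm F × Tm F) : Prop :=
  ∃ ρ : Nat ≃ Nat, rename ρ p.1 = q.1 ∧ simE B (rename ρ p.2) q.2

/-- Left-reducedness: left-hand sides are irreducible by the other rules. -/
def LeftReduced {F : Type} (R : TRS F) : Prop :=
  ∀ p ∈ R, NF (Rew (R \ {p})) p.1

/-- Right-`B`-reducedness: right-hand sides are `→R/B`-normal forms. -/
def RightBReduced {F : Type} (R B : TRS F) : Prop :=
  ∀ p ∈ R, NF (RewMod R B) p.2

def CompleteMod {F : Type} (R B : TRS F) : Prop :=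
  TerminatingMod R B ∧ ChurchRosserMod R B

def CanonicalMod {F : Type} (R B : TRS F) : Prop :=
  CompleteMod R B ∧ LeftReduced R ∧ RightBReduced R B

/-- Normalization equivalence modulo `B`: `→R^! · ∼B = →S^! · ∼B`. -/
def NormEquivMod {F : Type} (R S B : TRS F) : Prop :=
  ∀ s t, (∃ u, Relation.ReflTransGen (Rew R) s u ∧ NF (Rew R) u ∧ simE B u t) ↔
         (∃ u, Relation.ReflTransGen (Rew S) s u ∧ NF (Rew S) u ∧ simE B u t)

/-- Conversion equivalence modulo `B`: `↔*_{R∪B} = ↔*_{S∪B}`. -/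
def ConvEquivMod {F : Type} (R S B : TRS F) : Prop :=
  ∀ s t, Relation.EqvGen (fun a b => Rew R a b ∨ Rew B a b) s t ↔
         Relation.EqvGen (fun a b => Rew S a b ∨ Rew B a b) s t

/-- `Rdot` is a valid version `Ṙ` of `R`: its rules are rules of `R` whose
right-hand sides have been replaced by `→R/B`-normal forms, every rule of `R`
is represented up to right-`B`-equivalent variants, and `Rdot` is free of
distinct right-`B`-equivalent variants. -/
def IsRdot {F : Type} (R B Rdot : TRS F) : Prop :=
  (∀ q ∈ Rdot, ∃ r, (q.1, r) ∈ R ∧ Relation.ReflTransGen (RewMod R B) r q.2 ∧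
    NF (RewMod R B) q.2) ∧
  (∀ p ∈ R, ∃ r', Relation.ReflTransGen (RewMod R B) p.2 r' ∧
    NF (RewMod R B) r' ∧ ∃ q ∈ Rdot, REV B (p.1, r') q) ∧
  (∀ q ∈ Rdot, ∀ q' ∈ Rdot, REV B q q' → q = q')
namespace Tm
variable {F : Type}

theorem tm_ind {P : Tm F → Prop} (hv : ∀ n, P (.var n))
    (hf : ∀ f ts, (∀ t ∈ ts, P t) → P (.fn f ts)) : ∀ t, P t
  | .var n => hv n
  | .fn f ts => hf f ts (fun t ht => tm_ind hv hf t)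
decreasing_by
  have := List.sizeOf_lt_of_mem ht; simp; omega

theorem substList_eq_map (σ : Nat → Tm F) (ts : List (Tm F)) :
    substList σ ts = ts.map (subst σ) := by
  induction ts with
  | nil => rfl
  | cons t ts ih => simp [substList, ih]

theorem varsListL_eq (ts : List (Tm F)) :
    varsListL ts = ts.flatMap varsList := by
  induction ts with
  | nil => rfl
  | cons t ts ih => simp [varsListL, ih]

theorem subst_subst (σ τ : Nat → Tm F) (t : Tm F) :
    subst σ (subst τ t) = subst (fun n => subst σ (τ n)) t := by
  induction t using tm_ind with
  | hv n => rfl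
  | hf f ts ih =>
      simp only [subst, substList_eq_map, List.map_map]
      congr 1
      exact List.map_congr_left fun t ht => ih t ht

theorem subst_congr {σ τ : Nat → Tm F} {t : Tm F}
    (h : ∀ n ∈ varsList t, σ n = τ n) : subst σ t = subst τ t := by
  induction t using tm_ind with
  | hv n => exact h n (by simp [varsList])
  | hf f ts ih =>
      simp only [subst, substList_eq_map]
      congr 1
      refine List.map_congr_left fun t ht => ih t ht fun n hn => h n ?_
      simp [varsList, varsListL_eq]
      exact ⟨t, ht, hn⟩

theorem subst_var (t : Tm F) : subst .var t = t := by
  induction t using tm_ind with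
  | hv n => rfl
  | hf f ts ih =>
      simp only [subst, substList_eq_map]
      congr 1
      conv_rhs => rw [← List.map_id ts]
      exact List.map_congr_left fun t ht => ih t ht

theorem varsList_subst (σ : Nat → Tm F) (t : Tm F) :
    varsList (subst σ t) = (varsList t).flatMap (fun n => varsList (σ n)) := by
  induction t using tm_ind with
  | hv n => simp [subst, varsList]
  | hf f ts ih =>
      simp only [subst, varsList, varsListL_eq, substList_eq_map]
      revert ih
      induction ts with
      | nil => intro _; simp
      | cons a as ihl =>
          intro ih
          simp only [List.map_cons, List.flatMap_cons, ih a (List.mem_cons_self),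
            List.flatMap_append]
          rw [ihl (fun t ht => ih t (List.mem_cons_of_mem _ ht))]
end Tm
theorem listSetEq {α : Type _} : ∀ (l : List α) (i : Nat) (a : α), l[i]? = some a → l.set i a = l
  | [], i, a, h => by simp at h
  | x :: l, 0, a, h => by simp at h; simp [h]
  | x :: l, i+1, a, h => by simp at h; simp [listSetEq l i a h]

namespace Tm
variable {F : Type}

@[simp] theorem subtermAt_nil (t : Tm F) : subtermAt t [] = some t := by simp [subtermAt]
@[simp] theorem subtermAt_cons_var (n i : Nat) (p : List Nat) :
    subtermAt (F := F) (.var n) (i :: p) = none := by simp [subtermAt]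
theorem subtermAt_cons_fn (f : F) (ts : List (Tm F)) (i : Nat) (p : List Nat) :
    subtermAt (.fn f ts) (i :: p) = (ts[i]?).bind (fun u => subtermAt u p) := by
  cases h : ts[i]? <;> simp [subtermAt, h]
@[simp] theorem replaceAt_nil (t s : Tm F) : replaceAt t [] s = some s := by simp [replaceAt]
@[simp] theorem replaceAt_cons_var (n i : Nat) (p : List Nat) (s : Tm F) :
    replaceAt (F := F) (.var n) (i :: p) s = none := by simp [replaceAt]
theorem replaceAt_cons_fn (f : F) (ts : List (Tm F)) (i : Nat) (p : List Nat) (s : Tm F) :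
    replaceAt (.fn f ts) (i :: p) s =
      (ts[i]?).bind (fun u => (replaceAt u p s).map fun u' => .fn f (ts.set i u')) := by
  cases h : ts[i]? <;> simp [replaceAt, h]

theorem subtermAt_append (p q : List Nat) (s : Tm F) :
    subtermAt s (p ++ q) = (subtermAt s p).bind (fun u => subtermAt u q) := by
  induction p generalizing s with
  | nil => simp
  | cons i p ih =>
    cases s with
    | var n => simp
    | fn f ts =>
      rw [List.cons_append, subtermAt_cons_fn, subtermAt_cons_fn]
      cases h : ts[i]? with
      | none => simp
      | some u => simp [ih]

theorem replaceAt_append (p q : List Nat) (s w : Tm F) :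
    replaceAt s (p ++ q) w =
      (subtermAt s p).bind fun u => (replaceAt u q w).bind fun u' => replaceAt s p u' := by
  induction p generalizing s with
  | nil =>
    simp only [List.nil_append, subtermAt_nil, Option.bind_some]
    cases h : replaceAt s q w <;> simp [h]
  | cons i p ih =>
    cases s with
    | var n => simp
    | fn f ts =>
      rw [List.cons_append, replaceAt_cons_fn, subtermAt_cons_fn]
      cases h : ts[i]? with
      | none => simp
      | some u =>
        simp only [Option.bind_some, ih]
        cases h1 : subtermAt u p with
        | none => simp [h1]
        | some x =>
          simp only [Option.bind_some]
          cases h2 : replaceAt x q w with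
          | none => simp
          | some x' =>
            simp only [Option.bind_some]
            cases h3 : replaceAt u p x' <;> simp [replaceAt_cons_fn, h, h3]

theorem subtermAt_replaceAt {s w t : Tm F} {p : List Nat}
    (h : replaceAt s p w = some t) : subtermAt t p = some w := by
  induction p generalizing s t with
  | nil => simp at h; subst h; simp
  | cons i p ih =>
    cases s with
    | var n => simp at h
    | fn f ts =>
      rw [replaceAt_cons_fn] at h
      cases hi : ts[i]? with
      | none => rw [hi] at h; simp at h
      | some u =>
        rw [hi] at h; simp only [Option.bind_some] at h
        cases h2 : replaceAt u p w with
        | none => rw [h2] at h; simp at h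
        | some u' =>
          rw [h2] at h; simp at h
          subst h
          have hlen : i < ts.length := (List.getElem?_eq_some_iff.1 hi).1
          rw [subtermAt_cons_fn, List.getElem?_set_eq_of_lt _ (by simpa using hlen)]
          simpa using ih h2

theorem replaceAt_some {s u : Tm F} {p : List Nat} (h : subtermAt s p = some u)
    (w : Tm F) : ∃ t, replaceAt s p w = some t := by
  induction p generalizing s with
  | nil => exact ⟨w, by simp⟩
  | cons i p ih =>
    cases s with
    | var n => simp at h
    | fn f ts =>
      rw [subtermAt_cons_fn] at h
      cases hi : ts[i]? with
      | none => rw [hi] at h; simp at h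
      | some x =>
        rw [hi] at h; simp at h
        obtain ⟨t, ht⟩ := ih h
        exact ⟨.fn f (ts.set i t), by simp [replaceAt_cons_fn, hi, ht]⟩

theorem replaceAt_twice {s m t x v : Tm F} {p : List Nat}
    (h1 : replaceAt s p x = some m) (h2 : replaceAt s p v = some t) :
    replaceAt m p v = some t := by
  induction p generalizing s m t with
  | nil => simp at h1 h2 ⊢; subst h1; exact h2
  | cons i p ih =>
    cases s with
    | var n => simp at h1
    | fn f ts =>
      rw [replaceAt_cons_fn] at h1 h2
      cases hi : ts[i]? with
      | none => rw [hi] at h1; simp at h1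
      | some u =>
        rw [hi] at h1 h2; simp only [Option.bind_some] at h1 h2
        cases ha : replaceAt u p x with
        | none => rw [ha] at h1; simp at h1
        | some a =>
          cases hb : replaceAt u p v with
          | none => rw [hb] at h2; simp at h2
          | some b =>
            rw [ha] at h1; rw [hb] at h2
            simp at h1 h2
            subst h1; subst h2
            have hlen : i < ts.length := (List.getElem?_eq_some_iff.1 hi).1
            rw [replaceAt_cons_fn, List.getElem?_set_eq_of_lt _ (by simpa using hlen)]
            simp [ih ha hb, List.set_set]

theorem replaceAt_self {s u : Tm F} {p : List Nat} (h : subtermAt s p = some u) :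
    replaceAt s p u = some s := by
  induction p generalizing s with
  | nil => simp at h; subst h; simp
  | cons i p ih =>
    cases s with
    | var n => simp at h
    | fn f ts =>
      rw [subtermAt_cons_fn] at h
      cases hi : ts[i]? with
      | none => rw [hi] at h; simp at h
      | some x =>
        rw [hi] at h; simp at h
        rw [replaceAt_cons_fn, hi]
        simp [ih h, listSetEq ts i x hi]

theorem replaceAt_back {s u w t : Tm F} {p : List Nat} (h : subtermAt s p = some u)
    (h2 : replaceAt s p w = some t) : replaceAt t p u = some s :=
  replaceAt_twice h2 (replaceAt_self h)

theorem subtermAt_subst {s u : Tm F} {p : List Nat} (σ : Nat → Tm F)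
    (h : subtermAt s p = some u) : subtermAt (subst σ s) p = some (subst σ u) := by
  induction p generalizing s with
  | nil => simp at h; subst h; simp
  | cons i p ih =>
    cases s with
    | var n => simp at h
    | fn f ts =>
      rw [subtermAt_cons_fn] at h
      cases hi : ts[i]? with
      | none => rw [hi] at h; simp at h
      | some x =>
        rw [hi] at h; simp at h
        simp only [subst, substList_eq_map]
        rw [subtermAt_cons_fn, List.getElem?_map, hi]
        simpa using ih h

theorem replaceAt_subst {s w t : Tm F} {p : List Nat} (σ : Nat → Tm F)
    (h : replaceAt s p w = some t) :
    replaceAt (subst σ s) p (subst σ w) = some (subst σ t) := by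
  induction p generalizing s t with
  | nil => simp at h ⊢; rw [h]
  | cons i p ih =>
    cases s with
    | var n => simp at h
    | fn f ts =>
      rw [replaceAt_cons_fn] at h
      cases hi : ts[i]? with
      | none => rw [hi] at h; simp at h
      | some u =>
        rw [hi] at h; simp only [Option.bind_some] at h
        cases h2 : replaceAt u p w with
        | none => rw [h2] at h; simp at h
        | some u' =>
          rw [h2] at h; simp at h
          subst h
          simp only [subst, substList_eq_map]
          rw [replaceAt_cons_fn, List.getElem?_map, hi]
          simp [ih h2, List.map_set]
end Tm
section Closure
variable {F : Type} {R B : TRS F}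
open Relation Tm

theorem rew_mono {S : TRS F} (hRS : R ⊆ S) {s t : Tm F} (h : Rew R s t) : Rew S s t := by
  obtain ⟨p, l, r, σ, h1, h2, h3⟩ := h
  exact ⟨p, l, r, σ, hRS h1, h2, h3⟩

theorem rew_subst (τ : Nat → Tm F) {s t : Tm F} (h : Rew R s t) :
    Rew R (subst τ s) (subst τ t) := by
  obtain ⟨p, l, r, σ, h1, h2, h3⟩ := h
  refine ⟨p, l, r, fun n => subst τ (σ n), h1, ?_, ?_⟩
  · rw [← subst_subst]; exact subtermAt_subst τ h2
  · rw [← subst_subst]; exact replaceAt_subst τ h3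

theorem rew_context {u v s t : Tm F} {p : List Nat} (h : Rew R u v)
    (h1 : subtermAt s p = some u) (h2 : replaceAt s p v = some t) : Rew R s t := by
  obtain ⟨q, l, r, σ, hR, hs', hr'⟩ := h
  refine ⟨p ++ q, l, r, σ, hR, ?_, ?_⟩
  · rw [subtermAt_append, h1, Option.bind_some]; exact hs'
  · rw [replaceAt_append, h1, Option.bind_some, hr', Option.bind_some]; exact h2

theorem simE_subst (τ : Nat → Tm F) {s t : Tm F} (h : simE B s t) :
    simE B (subst τ s) (subst τ t) := by
  induction h with
  | rel a b hab => exact EqvGen.rel _ _ (rew_subst τ hab)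
  | refl a => exact EqvGen.refl _
  | symm a b _ ih => exact EqvGen.symm _ _ ih
  | trans a b c _ _ ih1 ih2 => exact EqvGen.trans _ _ _ ih1 ih2

theorem simE_context {u v : Tm F} (h : simE B u v) :
    ∀ s t (p : List Nat), subtermAt s p = some u → replaceAt s p v = some t →
      simE B s t := by
  induction h with
  | rel a b hab => exact fun s t p h1 h2 => EqvGen.rel _ _ (rew_context hab h1 h2)
  | refl a =>
      intro s t p h1 h2
      rw [replaceAt_self h1] at h2; cases h2; exact EqvGen.refl _
  | symm a b _ ih =>
      intro s t p h1 h2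
      exact EqvGen.symm _ _ (ih t s p (subtermAt_replaceAt h2) (replaceAt_back h1 h2))
  | trans a b c _ _ ih1 ih2 =>
      intro s t p h1 h2
      obtain ⟨m, hm⟩ := replaceAt_some h1 b
      exact EqvGen.trans _ _ _ (ih1 s m p h1 hm)
        (ih2 m t p (subtermAt_replaceAt hm) (replaceAt_twice hm h2))

theorem rew_rewMod {s t : Tm F} (h : Rew R s t) : RewMod R B s t :=
  ⟨s, t, EqvGen.refl _, h, EqvGen.refl _⟩

theorem rewMod_subst (τ : Nat → Tm F) {s t : Tm F} (h : RewMod R B s t) :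
    RewMod R B (subst τ s) (subst τ t) := by
  obtain ⟨s', t', h1, h2, h3⟩ := h
  exact ⟨subst τ s', subst τ t', simE_subst τ h1, rew_subst τ h2, simE_subst τ h3⟩

theorem rewMod_context {u v s t : Tm F} {p : List Nat} (h : RewMod R B u v)
    (h1 : subtermAt s p = some u) (h2 : replaceAt s p v = some t) :
    RewMod R B s t := by
  obtain ⟨u', v', hu, huv, hv⟩ := h
  obtain ⟨m1, hm1⟩ := replaceAt_some h1 u'
  obtain ⟨m2, hm2⟩ := replaceAt_some (subtermAt_replaceAt hm1) v'
  refine ⟨m1, m2, simE_context hu s m1 p h1 hm1,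
    rew_context huv (subtermAt_replaceAt hm1) hm2, ?_⟩
  exact simE_context hv m2 t p (subtermAt_replaceAt hm2)
    (replaceAt_twice hm2 (replaceAt_twice hm1 h2))

theorem rtg_context {r : Tm F → Tm F → Prop}
    (hr : ∀ {u v s t : Tm F} {p : List Nat}, r u v → subtermAt s p = some u →
      replaceAt s p v = some t → r s t)
    {u v : Tm F} (h : ReflTransGen r u v) :
    ∀ s t (p : List Nat), subtermAt s p = some u → replaceAt s p v = some t →
      ReflTransGen r s t := by
  induction h with
  | refl =>
      intro s t p h1 h2
      rw [replaceAt_self h1] at h2; cases h2; exact ReflTransGen.refl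
  | tail hab hbc ih =>
      intro s t p h1 h2
      obtain ⟨m, hm⟩ := replaceAt_some h1 _
      exact (ih s m p h1 hm).tail
        (hr hbc (subtermAt_replaceAt hm) (replaceAt_twice hm h2))

theorem rtg_subst {r : Tm F → Tm F → Prop} (τ : Nat → Tm F)
    (hr : ∀ {a b : Tm F}, r a b → r (subst τ a) (subst τ b))
    {s t : Tm F} (h : ReflTransGen r s t) :
    ReflTransGen r (subst τ s) (subst τ t) := by
  induction h with
  | refl => exact ReflTransGen.refl
  | tail _ hbc ih => exact ih.tail (hr hbc)

theorem eqv_subst {r : Tm F → Tm F → Prop} (τ : Nat → Tm F)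
    (hr : ∀ {a b : Tm F}, r a b → r (subst τ a) (subst τ b))
    {s t : Tm F} (h : EqvGen r s t) : EqvGen r (subst τ s) (subst τ t) := by
  induction h with
  | rel a b hab => exact EqvGen.rel _ _ (hr hab)
  | refl a => exact EqvGen.refl _
  | symm a b _ ih => exact EqvGen.symm _ _ ih
  | trans a b c _ _ ih1 ih2 => exact EqvGen.trans _ _ _ ih1 ih2

theorem rtg_symm {α : Type _} {r : α → α → Prop} (hsym : ∀ {a b}, r a b → r b a)
    {a b : α} (h : ReflTransGen r a b) : ReflTransGen r b a := by
  induction h with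
  | refl => exact ReflTransGen.refl
  | tail _ hbc ih => exact ReflTransGen.head (hsym hbc) ih

theorem nf_rtg {α : Type _} {r : α → α → Prop} {a b : α} (hnf : NF r a)
    (h : ReflTransGen r a b) : a = b := by
  rcases h.cases_head with rfl | ⟨c, hac, _⟩
  · rfl
  · exact absurd hac (hnf c)

theorem exists_nf {α : Type _} {r : α → α → Prop}
    (hwf : WellFounded (fun a b => r b a)) (a : α) :
    ∃ b, ReflTransGen r a b ∧ NF r b := by
  induction a using hwf.induction with
  | _ a ih =>
    by_cases h : ∃ b, r a b
    · obtain ⟨b, hb⟩ := h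
      obtain ⟨c, hc1, hc2⟩ := ih b hb
      exact ⟨c, ReflTransGen.head hb hc1, hc2⟩
    · exact ⟨a, ReflTransGen.refl, fun b hb => h ⟨b, hb⟩⟩

theorem transGen_simE_left {a a' b : Tm F} (h : simE B a a')
    (h2 : Relation.TransGen (RewMod R B) a' b) : Relation.TransGen (RewMod R B) a b := by
  induction h2 with
  | single hr =>
      obtain ⟨x, y, hx, hxy, hy⟩ := hr
      exact TransGen.single ⟨x, y, EqvGen.trans _ _ _ h hx, hxy, hy⟩
  | tail _ hr ih => exact ih.tail hr

theorem transGen_simE_right {a b b' : Tm F} (h2 : Relation.TransGen (RewMod R B) a b)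
    (h : simE B b b') : Relation.TransGen (RewMod R B) a b' := by
  rcases Relation.TransGen.tail'_iff.mp h2 with ⟨c, hac, hcb⟩
  obtain ⟨x, y, hx, hxy, hy⟩ := hcb
  exact Relation.TransGen.tail' hac ⟨x, y, hx, hxy, EqvGen.trans _ _ _ hy h⟩

end Closure
section PermExtend
open Finset

theorem exists_perm_extend (A : Finset Nat) (g : Nat → Nat)
    (hg : Set.InjOn g (A : Set Nat)) : ∃ π : Equiv.Perm Nat, ∀ n ∈ A, π n = g n := by
  classical
  set Bf : Finset Nat := A.image g with hBf
  set S : Finset Nat := A ∪ Bf with hS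
  have hAS : A ⊆ S := subset_union_left
  have hBS : Bf ⊆ S := subset_union_right
  have hcard : (S \ A).card = (S \ Bf).card := by
    rw [card_sdiff_of_subset hAS, card_sdiff_of_subset hBS, Finset.card_image_of_injOn hg]
  let e : (S \ A : Finset Nat) ≃ (S \ Bf : Finset Nat) := Finset.equivOfCardEq hcard
  let π : Nat → Nat := fun n =>
    if hA : n ∈ A then g n else if hSA : n ∈ S \ A then (e ⟨n, hSA⟩ : Nat) else n
  have hπA : ∀ n ∈ A, π n = g n := by
    intro n hn; show dite _ _ _ = _; rw [dif_pos hn]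
  have hb2eq : ∀ n (hSA : n ∈ S \ A), π n = (e ⟨n, hSA⟩ : Nat) := by
    intro n hSA
    show dite _ _ _ = _
    rw [dif_neg (mem_sdiff.1 hSA).2, dif_pos hSA]
  have hb3eq : ∀ n, n ∉ A → n ∉ S \ A → π n = n := by
    intro n hA hSA; show dite _ _ _ = _; rw [dif_neg hA, dif_neg hSA]
  have hclass : ∀ n, (π n ∈ Bf ∧ n ∈ A) ∨ (π n ∈ S \ Bf ∧ n ∈ S \ A) ∨
      (π n = n ∧ n ∉ S) := by
    intro n
    by_cases hA : n ∈ A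
    · exact Or.inl ⟨by rw [hπA n hA]; exact mem_image_of_mem g hA, hA⟩
    · by_cases hSA : n ∈ S \ A
      · exact Or.inr (Or.inl ⟨by rw [hb2eq n hSA]; exact (e ⟨n, hSA⟩).2, hSA⟩)
      · refine Or.inr (Or.inr ⟨hb3eq n hA hSA, ?_⟩)
        intro hnS
        exact hSA (mem_sdiff.2 ⟨hnS, hA⟩)
  have hinj : Function.Injective π := by
    intro a b hab
    rcases hclass a with ⟨ha1, ha2⟩ | ⟨ha1, ha2⟩ | ⟨ha1, ha2⟩ <;>
      rcases hclass b with ⟨hb1, hb2⟩ | ⟨hb1, hb2⟩ | ⟨hb1, hb2⟩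
    · exact hg (by exact_mod_cast ha2) (by exact_mod_cast hb2)
        (by rwa [hπA a ha2, hπA b hb2] at hab)
    · exact absurd ha1 (by rw [hab]; exact (mem_sdiff.1 hb1).2)
    · exact absurd (hBS ha1) (by rw [hab, hb1]; exact hb2)
    · exact absurd hb1 (by rw [← hab]; exact (mem_sdiff.1 ha1).2)
    · have : e ⟨a, ha2⟩ = e ⟨b, hb2⟩ :=
        Subtype.ext (by rw [← hb2eq a ha2, ← hb2eq b hb2, hab])
      exact congrArg Subtype.val (e.injective this)
    · exact absurd ((mem_sdiff.1 ha1).1) (by rw [hab, hb1]; exact hb2)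
    · exact absurd (hBS hb1) (by rw [← hab, ha1]; exact ha2)
    · exact absurd ((mem_sdiff.1 hb1).1) (by rw [← hab, ha1]; exact ha2)
    · rw [ha1, hb1] at hab; exact hab
  have hsurj : Function.Surjective π := by
    intro y
    by_cases hyB : y ∈ Bf
    · obtain ⟨a, haA, hay⟩ := mem_image.1 hyB
      exact ⟨a, by rw [hπA a haA, hay]⟩
    · by_cases hyS : y ∈ S \ Bf
      · refine ⟨(e.symm ⟨y, hyS⟩ : Nat), ?_⟩
        have hx := (e.symm ⟨y, hyS⟩).2
        rw [hb2eq _ hx]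
        have : (⟨(e.symm ⟨y, hyS⟩ : Nat), hx⟩ : (S \ A : Finset Nat)) = e.symm ⟨y, hyS⟩ :=
          Subtype.ext rfl
        rw [this, e.apply_symm_apply]
      · have hyS' : y ∉ S := fun h => hyS (mem_sdiff.2 ⟨h, hyB⟩)
        have hyA : y ∉ A := fun h => hyS' (hAS h)
        have hySA : y ∉ S \ A := fun h => hyS' (mem_sdiff.1 h).1
        exact ⟨y, hb3eq y hyA hySA⟩
  exact ⟨Equiv.ofBijective π ⟨hinj, hsurj⟩, hπA⟩

end PermExtend
namespace Tm
variable {F : Type}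

mutual
def fsize : Tm F → Nat
  | .var _ => 0
  | .fn _ ts => 1 + fsizeL ts
def fsizeL : List (Tm F) → Nat
  | [] => 0
  | t :: ts => fsize t + fsizeL ts
end

theorem fsizeL_eq (ts : List (Tm F)) : fsizeL ts = (ts.map fsize).sum := by
  induction ts with
  | nil => rfl
  | cons t ts ih => simp [fsizeL, ih]

theorem fsize_mem {t : Tm F} {ts : List (Tm F)} (h : t ∈ ts) : fsize t ≤ fsizeL ts := by
  induction ts with
  | nil => simp at h
  | cons a as ih =>
    rcases List.mem_cons.1 h with rfl | h'
    · simp [fsizeL]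
    · have := ih h'; simp [fsizeL]; omega

theorem fsize_subst (σ : Nat → Tm F) (t : Tm F) :
    fsize (subst σ t) = fsize t + ((varsList t).map (fun n => fsize (σ n))).sum := by
  induction t using tm_ind with
  | hv n => simp [subst, varsList, fsize]
  | hf f ts ih =>
    simp only [subst, fsize, substList_eq_map, varsList, varsListL_eq, fsizeL_eq,
      List.map_map]
    revert ih
    induction ts with
    | nil => intro _; simp
    | cons a as ihl =>
      intro ih
      have h1 := ih a (List.mem_cons_self)
      have h2 := ihl (fun t ht => ih t (List.mem_cons_of_mem _ ht))
      simp only [List.map_cons, List.sum_cons, List.flatMap_cons, List.map_append,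
        List.sum_append, Function.comp] at h1 h2 ⊢
      omega

theorem fsize_subst_ge (σ : Nat → Tm F) (t : Tm F) : fsize t ≤ fsize (subst σ t) := by
  rw [fsize_subst]; omega

theorem fsize_subterm_le {s u : Tm F} {p : List Nat} (h : subtermAt s p = some u) :
    fsize u ≤ fsize s := by
  induction p generalizing s with
  | nil => simp at h; subst h; rfl
  | cons i p ih =>
    cases s with
    | var n => simp at h
    | fn f ts =>
      rw [subtermAt_cons_fn] at h
      cases hi : ts[i]? with
      | none => rw [hi] at h; simp at h
      | some x =>
        rw [hi] at h; simp at h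
        have hx : x ∈ ts := List.mem_of_getElem? hi
        have := fsize_mem hx
        have := ih h
        simp [fsize]; omega

theorem fsize_subterm_lt {s u : Tm F} {i : Nat} {p : List Nat}
    (h : subtermAt s (i :: p) = some u) : fsize u < fsize s := by
  cases s with
  | var n => simp at h
  | fn f ts =>
    rw [subtermAt_cons_fn] at h
    cases hi : ts[i]? with
    | none => rw [hi] at h; simp at h
    | some x =>
      rw [hi] at h; simp at h
      have hx : x ∈ ts := List.mem_of_getElem? hi
      have := fsize_mem hx
      have := fsize_subterm_le h
      simp [fsize]; omega

/-- The termination measure for strict encompassment. -/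
def emeasure (t : Tm F) : Nat ×ₗ Nat :=
  ((fsize t, (varsList t).length - (varsList t).toFinset.card) : Nat × Nat)

theorem natSumZero : ∀ (l : List Nat), l.sum = 0 → ∀ x ∈ l, x = 0 := by
  intro l h x hx
  induction l with
  | nil => simp at hx
  | cons a as ih =>
    simp only [List.sum_cons] at h
    rcases List.mem_cons.1 hx with rfl | hx'
    · omega
    · exact ih (by omega) hx'

theorem listToFinsetMap (l : List Nat) (g : Nat → Nat) :
    (l.map g).toFinset = l.toFinset.image g := by
  induction l with
  | nil => simp
  | cons a as ih => simp [ih]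

theorem flatMap_vars_eq_map {σ : Nat → Tm F} {g : Nat → Nat} :
    ∀ (l : List Nat), (∀ n ∈ l, σ n = .var (g n)) →
      l.flatMap (fun n => varsList (σ n)) = l.map g := by
  intro l h
  induction l with
  | nil => simp
  | cons a as ih =>
    simp only [List.flatMap_cons, List.map_cons, h a (List.mem_cons_self),
      varsList]
    rw [ih (fun n hn => h n (List.mem_cons_of_mem _ hn))]
    rfl

theorem strictEnc_measure {s t : Tm F} (h : StrictEnc s t) :
    Prod.Lex (· < ·) (· < ·) (emeasure t) (emeasure s) := by
  classical
  obtain ⟨⟨p, w, σ, hsub, rfl⟩, hnv⟩ := h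
  cases p with
  | cons i p =>
    apply Prod.Lex.left
    exact lt_of_le_of_lt (fsize_subst_ge σ t) (fsize_subterm_lt hsub)
  | nil =>
    simp at hsub
    rcases Nat.lt_or_ge (fsize t) (fsize s) with hlt | hge
    · exact Prod.Lex.left _ _ hlt
    · have hfeq : fsize s = fsize t := by
        have h1 : fsize t ≤ fsize s := by rw [hsub]; exact fsize_subst_ge σ t
        omega
      have hsum : ((varsList t).map (fun n => fsize (σ n))).sum = 0 := by
        have h2 := fsize_subst σ t; rw [← hsub] at h2; omega
      set g : Nat → Nat := fun n => match σ n with | .var m => m | _ => 0 with hgdef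
      have hvar : ∀ n ∈ varsList t, σ n = .var (g n) := by
        intro n hn
        have h0 : fsize (σ n) = 0 := by
          refine natSumZero _ hsum _ (List.mem_map_of_mem hn)
        cases hσ : σ n with
        | var m => simp [hgdef, hσ]
        | fn f ts => rw [hσ] at h0; simp [fsize] at h0
      have hvl : varsList s = (varsList t).map g := by
        rw [hsub, varsList_subst]
        exact flatMap_vars_eq_map _ hvar
      have hocc : (varsList s).length = (varsList t).length := by simp [hvl]
      have himg : (varsList s).toFinset = (varsList t).toFinset.image g := by
        rw [hvl, listToFinsetMap]
      have hcardle : (varsList s).toFinset.card ≤ (varsList t).toFinset.card := by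
        rw [himg]; exact Finset.card_image_le
      have hcardlt : (varsList s).toFinset.card < (varsList t).toFinset.card := by
        rcases Nat.lt_or_ge ((varsList s).toFinset.card) ((varsList t).toFinset.card)
          with h' | h'
        · exact h'
        · exfalso
          have hceq : ((varsList t).toFinset.image g).card = (varsList t).toFinset.card := by
            rw [← himg]; omega
          have hinjOn : Set.InjOn g ((varsList t).toFinset : Set Nat) :=
            Finset.card_image_iff.1 hceq
          obtain ⟨π, hπ⟩ := exists_perm_extend _ g hinjOn
          apply hnv
          refine ⟨π.symm, ?_⟩
          rw [hsub]
          show subst _ (subst σ t) = t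
          rw [subst_subst]
          have : ∀ n ∈ varsList t, subst (fun n => Tm.var (π.symm n)) (σ n) = .var n := by
            intro n hn
            rw [hvar n hn]
            show Tm.var (π.symm (g n)) = Tm.var n
            rw [← hπ n (by simp; exact hn), Equiv.symm_apply_apply]
          calc subst (fun n => subst (fun n => Tm.var (π.symm n)) (σ n)) t
              = subst .var t := subst_congr (fun n hn => this n hn)
            _ = t := subst_var t
      have hvle : (varsList t).toFinset.card ≤ (varsList t).length :=
        List.toFinset_card_le _
      unfold emeasure
      rw [← hfeq, hocc]
      exact Prod.Lex.right _ (by omega)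

theorem strictEnc_wf : WellFounded (fun a b : Tm F => StrictEnc b a) := by
  have hwf : WellFounded (Prod.Lex (· < ·) (· < ·) : Nat ×ₗ Nat → Nat ×ₗ Nat → Prop) :=
    WellFounded.prod_lex Nat.lt_wfRel.wf Nat.lt_wfRel.wf
  exact Subrelation.wf (fun {a b} h => strictEnc_measure h) (InvImage.wf emeasure hwf)

end Tm
section Main
open Relation Tm

variable {F : Type} {R B Rdot Rddot : TRS F}

/-- Conversion with `R ∪ B`. -/
abbrev ConvRB (R B : TRS F) : Tm F → Tm F → Prop :=
  Relation.EqvGen (fun a b => Rew R a b ∨ Rew B a b)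

theorem conv_of_rewR {a b : Tm F} (h : Rew R a b) : ConvRB R B a b :=
  Relation.EqvGen.rel a b (Or.inl h)

theorem conv_of_rewB {a b : Tm F} (h : Rew B a b) : ConvRB R B a b :=
  Relation.EqvGen.rel a b (Or.inr h)

theorem conv_trans {a b c : Tm F} (h1 : ConvRB R B a b) (h2 : ConvRB R B b c) :
    ConvRB R B a c := Relation.EqvGen.trans a b c h1 h2

theorem conv_symm {a b : Tm F} (h1 : ConvRB R B a b) : ConvRB R B b a :=
  Relation.EqvGen.symm a b h1

theorem simE_conv {a b : Tm F} (h : simE B a b) : ConvRB R B a b :=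
  Relation.EqvGen.mono (fun _ _ h => Or.inr h) _ _ h

theorem rewMod_conv {a b : Tm F} (h : RewMod R B a b) : ConvRB R B a b := by
  obtain ⟨x, y, h1, h2, h3⟩ := h
  exact conv_trans (simE_conv h1) (conv_trans (conv_of_rewR h2) (simE_conv h3))

theorem rtgRewMod_conv {a b : Tm F} (h : ReflTransGen (RewMod R B) a b) :
    ConvRB R B a b := by
  induction h with
  | refl => exact EqvGen.refl _
  | tail _ h2 ih => exact conv_trans ih (rewMod_conv h2)

theorem tgRewMod_conv {a b : Tm F} (h : TransGen (RewMod R B) a b) :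
    ConvRB R B a b := by
  induction h with
  | single h => exact rewMod_conv h
  | tail _ h2 ih => exact conv_trans ih (rewMod_conv h2)

theorem rtg_rew_conv {a b : Tm F} (h : ReflTransGen (Rew R) a b) : ConvRB R B a b := by
  induction h with
  | refl => exact EqvGen.refl _
  | tail _ h2 ih => exact conv_trans ih (conv_of_rewR h2)

theorem conv_convMod {a b : Tm F} (h : ConvRB R B a b) : ConvMod R B a b := by
  induction h with
  | rel x y hxy =>
      rcases hxy with h | h
      · exact ReflTransGen.single (Or.inl h)
      · exact ReflTransGen.single (Or.inr (Or.inr (EqvGen.rel _ _ h)))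
  | refl x => exact ReflTransGen.refl
  | symm x y _ ih =>
      refine rtg_symm ?_ ih
      intro a b hab
      rcases hab with h | h | h
      · exact Or.inr (Or.inl h)
      · exact Or.inl h
      · exact Or.inr (Or.inr (EqvGen.symm _ _ h))
  | trans x y z _ _ ih1 ih2 => exact ih1.trans ih2

theorem nfMod_nf {a : Tm F} (h : NF (RewMod R B) a) : NF (Rew R) a :=
  fun b hb => h b (rew_rewMod hb)

theorem conv_nf_simE (hcomp : CompleteMod R B) {u v : Tm F} (h : ConvRB R B u v)
    (hu : NF (Rew R) u) (hv : NF (Rew R) v) : simE B u v := by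
  obtain ⟨a, b, hua, hab, hvb⟩ := hcomp.2 u v (conv_convMod h)
  rw [nf_rtg hu hua, nf_rtg hv hvb]
  exact hab

theorem rename_eq_subst (ρ : Nat ≃ Nat) (t : Tm F) :
    rename ρ t = subst (fun n => .var (ρ n)) t := rfl

theorem subst_rename (τ : Nat → Tm F) (ρ : Nat ≃ Nat) (t : Tm F) :
    subst τ (rename ρ t) = subst (fun n => τ (ρ n)) t := by
  rw [rename_eq_subst, subst_subst]
  exact subst_congr (fun n _ => by simp [subst])

theorem rename_symm_cancel (ρ : Nat ≃ Nat) (t : Tm F) :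
    subst (fun n => .var (ρ.symm n)) (rename ρ t) = t := by
  rw [subst_rename]
  calc subst (fun n => Tm.var (ρ.symm (ρ n))) t = subst .var t :=
        subst_congr (fun n _ => by rw [Equiv.symm_apply_apply])
    _ = t := subst_var t

theorem nfMod_rename (ρ : Nat ≃ Nat) {u : Tm F} (h : NF (RewMod R B) u) :
    NF (RewMod R B) (rename ρ u) := by
  intro v hv
  have h2 := rewMod_subst (fun n => .var (ρ.symm n)) hv
  rw [rename_symm_cancel] at h2
  exact h _ h2

theorem rew_of_rule {l r : Tm F} (h : (l, r) ∈ R) : Rew R l r :=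
  ⟨[], l, r, .var, h, by simp [subst_var], by simp [subst_var]⟩

theorem conv_subst (τ : Nat → Tm F) {a b : Tm F} (h : ConvRB R B a b) :
    ConvRB R B (subst τ a) (subst τ b) := by
  refine eqv_subst τ ?_ h
  intro a b hab
  rcases hab with h | h
  · exact Or.inl (rew_subst τ h)
  · exact Or.inr (rew_subst τ h)

theorem tg_swap {α : Type _} {r : α → α → Prop} {a b : α} (h : TransGen r a b) :
    TransGen (fun x y => r y x) b a := by
  induction h with
  | single h => exact TransGen.single h
  | tail _ h2 ih => exact TransGen.head h2 ih

theorem tg_head_ex {α : Type _} {r : α → α → Prop} {a b : α} (h : TransGen r a b) :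
    ∃ c, r a c := by
  induction h with
  | single h => exact ⟨_, h⟩
  | tail _ _ ih => exact ih

/-- A `Rdot`-step decomposes into an `R`-step followed by `→R/B` steps. -/
theorem rew_Rdot_decomp (hdot : IsRdot R B Rdot) {s t : Tm F} (h : Rew Rdot s t) :
    ∃ m, Rew R s m ∧ ReflTransGen (RewMod R B) m t := by
  obtain ⟨p, l, r, σ, hq, hs, hr⟩ := h
  obtain ⟨r₀, hR, hrtg, _⟩ := hdot.1 (l, r) hq
  obtain ⟨m, hm⟩ := replaceAt_some hs (subst σ r₀)
  refine ⟨m, ⟨p, l, r₀, σ, hR, hs, hm⟩, ?_⟩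
  have h1 : ReflTransGen (RewMod R B) (subst σ r₀) (subst σ r) :=
    rtg_subst σ (fun h => rewMod_subst σ h) hrtg
  exact rtg_context (fun h h1 h2 => rewMod_context h h1 h2) h1 m t p
    (subtermAt_replaceAt hm) (replaceAt_twice hm hr)

theorem rew_Rdot_tg (hdot : IsRdot R B Rdot) {s t : Tm F} (h : Rew Rdot s t) :
    TransGen (RewMod R B) s t := by
  obtain ⟨m, h1, h2⟩ := rew_Rdot_decomp hdot h
  exact TransGen.head' (rew_rewMod h1) h2

theorem Rddot_subset (hddot : Rddot = {q ∈ Rdot | NF (Rew (Rdot \ {q})) q.1}) :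
    Rddot ⊆ Rdot := by
  rw [hddot]; exact Set.sep_subset _ _

/-- Key lemma: a term reducible with `Rdot` is reducible with `Rddot`. -/
theorem key (hcomp : CompleteMod R B) (hdot : IsRdot R B Rdot)
    (hddot : Rddot = {q ∈ Rdot | NF (Rew (Rdot \ {q})) q.1}) :
    ∀ l : Tm F, ∀ r (σ : Nat → Tm F) s p, (l, r) ∈ Rdot →
      subtermAt s p = some (subst σ l) → ∃ t, Rew Rddot s t := by
  intro l
  induction l using strictEnc_wf.induction with
  | _ l ih =>
  intro r σ s p hq hs
  by_cases hmem : (l, r) ∈ Rddot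
  · obtain ⟨t, ht⟩ := replaceAt_some hs (subst σ r)
    exact ⟨t, p, l, r, σ, hmem, hs, ht⟩
  · have hnnf : ¬ NF (Rew (Rdot \ {(l, r)})) l := by
      intro hnf
      exact hmem (by rw [hddot]; exact ⟨hq, hnf⟩)
    have hred : ∃ t₀, Rew (Rdot \ {(l, r)}) l t₀ := by
      by_contra hcon
      push_neg at hcon
      exact hnnf (fun b hb => hcon b hb)
    obtain ⟨t₀, p', l', r', τ, hq', hsl, _⟩ := hred
    have hq'1 : (l', r') ∈ Rdot := hq'.1
    have hq'2 : (l', r') ≠ (l, r) := hq'.2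
    -- position of l' inside s
    have hs2 : subtermAt (subst σ l) p' = some (subst σ (subst τ l')) :=
      subtermAt_subst σ hsl
    have hs3 : subtermAt s (p ++ p') = some (subst (fun n => subst σ (τ n)) l') := by
      rw [subtermAt_append, hs, Option.bind_some, hs2, subst_subst]
    -- strict encompassment
    have henc : StrictEnc l l' := by
      refine ⟨⟨p', subst τ l', τ, hsl, rfl⟩, ?_⟩
      intro hvar
      obtain ⟨ρ, hρ⟩ := hvar
      obtain ⟨r₀, hR0, hrtg0, hnfr⟩ := hdot.1 (l, r) hq
      obtain ⟨r₀', hR0', hrtg0', hnfr'⟩ := hdot.1 (l', r') hq'1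
      have hconv1 : ConvRB R B l r :=
        conv_trans (conv_of_rewR (rew_of_rule hR0)) (rtgRewMod_conv hrtg0)
      have hconv2 : ConvRB R B l' r' :=
        conv_trans (conv_of_rewR (rew_of_rule hR0')) (rtgRewMod_conv hrtg0')
      have hconv3 : ConvRB R B (rename ρ l) (rename ρ r) :=
        conv_subst (fun n => .var (ρ n)) hconv1
      have hconv4 : ConvRB R B (rename ρ r) r' := by
        refine conv_trans (conv_symm hconv3) ?_
        rw [hρ]; exact hconv2
      have hnf1 : NF (Rew R) (rename ρ r) := nfMod_nf (nfMod_rename ρ hnfr)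
      have hnf2 : NF (Rew R) r' := nfMod_nf hnfr'
      have hsim : simE B (rename ρ r) r' := conv_nf_simE hcomp hconv4 hnf1 hnf2
      have hrev : REV B (l, r) (l', r') := ⟨ρ, hρ, hsim⟩
      exact hq'2 ((hdot.2.2 (l, r) hq (l', r') hq'1 hrev).symm)
    exact ih l' henc r' (fun n => subst σ (τ n)) s (p ++ p') hq'1 hs3

end Main
section Final
open Relation Tm

variable {F : Type} {R B Rdot Rddot : TRS F}

theorem red_R_Rddot (hcomp : CompleteMod R B) (hdot : IsRdot R B Rdot)
    (hddot : Rddot = {q ∈ Rdot | NF (Rew (Rdot \ {q})) q.1}) {s t : Tm F}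
    (h : Rew R s t) : ∃ t', Rew Rddot s t' := by
  obtain ⟨p, l, r, σ, hR, hs, _⟩ := h
  obtain ⟨r'', hrtg, hnf, q, hqRdot, ρ, hρ1, hρ2⟩ := hdot.2.1 (l, r) hR
  have hs' : subtermAt s p = some (subst (fun n => σ (ρ.symm n)) q.1) := by
    rw [← hρ1, subst_rename]
    have heq : subst (fun n => σ (ρ.symm (ρ n))) l = subst σ l :=
      subst_congr (fun n _ => by rw [Equiv.symm_apply_apply])
    rw [heq]; exact hs
  exact key hcomp hdot hddot q.1 q.2 (fun n => σ (ρ.symm n)) s p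
    (by simpa using hqRdot) hs'

theorem nf_Rddot_nf_R (hcomp : CompleteMod R B) (hdot : IsRdot R B Rdot)
    (hddot : Rddot = {q ∈ Rdot | NF (Rew (Rdot \ {q})) q.1}) {a : Tm F}
    (hnf : NF (Rew Rddot) a) : NF (Rew R) a := by
  intro b hb
  obtain ⟨t', ht'⟩ := red_R_Rddot hcomp hdot hddot hb
  exact hnf t' ht'

theorem termMod_Rddot (hcomp : CompleteMod R B) (hdot : IsRdot R B Rdot)
    (hddot : Rddot = {q ∈ Rdot | NF (Rew (Rdot \ {q})) q.1}) :
    TerminatingMod Rddot B := by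
  refine Subrelation.wf ?_ (hcomp.1.transGen)
  intro a b h
  obtain ⟨x, y, h1, h2, h3⟩ := h
  have h2' : TransGen (RewMod R B) x y :=
    rew_Rdot_tg hdot (rew_mono (Rddot_subset hddot) h2)
  exact tg_swap (transGen_simE_right (transGen_simE_left h1 h2') h3)

theorem term_Rddot_plain (hcomp : CompleteMod R B) (hdot : IsRdot R B Rdot)
    (hddot : Rddot = {q ∈ Rdot | NF (Rew (Rdot \ {q})) q.1}) :
    WellFounded (fun a b : Tm F => Rew Rddot b a) :=
  Subrelation.wf (fun h => rew_rewMod h) (termMod_Rddot hcomp hdot hddot)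

theorem term_R_plain (hcomp : CompleteMod R B) :
    WellFounded (fun a b : Tm F => Rew R b a) :=
  Subrelation.wf (fun h => rew_rewMod h) hcomp.1

theorem rtg_Rddot_conv (hdot : IsRdot R B Rdot)
    (hddot : Rddot = {q ∈ Rdot | NF (Rew (Rdot \ {q})) q.1}) {a b : Tm F}
    (h : ReflTransGen (Rew Rddot) a b) : ConvRB R B a b := by
  induction h with
  | refl => exact EqvGen.refl _
  | tail _ h2 ih =>
      exact conv_trans ih
        (tgRewMod_conv (rew_Rdot_tg hdot (rew_mono (Rddot_subset hddot) h2)))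

theorem cr_Rddot (hcomp : CompleteMod R B) (hdot : IsRdot R B Rdot)
    (hddot : Rddot = {q ∈ Rdot | NF (Rew (Rdot \ {q})) q.1}) :
    ChurchRosserMod Rddot B := by
  intro s t hconv
  have hc : ConvRB R B s t := by
    induction hconv with
    | refl => exact EqvGen.refl _
    | tail _ hstep ih =>
        rcases hstep with h | h | h
        · exact conv_trans ih
            (tgRewMod_conv (rew_Rdot_tg hdot (rew_mono (Rddot_subset hddot) h)))
        · exact conv_trans ih (conv_symm
            (tgRewMod_conv (rew_Rdot_tg hdot (rew_mono (Rddot_subset hddot) h))))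
        · exact conv_trans ih (simE_conv h)
  obtain ⟨u, hsu, hnfu⟩ := exists_nf (term_Rddot_plain hcomp hdot hddot) s
  obtain ⟨v, htv, hnfv⟩ := exists_nf (term_Rddot_plain hcomp hdot hddot) t
  have huv : ConvRB R B u v :=
    conv_trans (conv_symm (rtg_Rddot_conv hdot hddot hsu))
      (conv_trans hc (rtg_Rddot_conv hdot hddot htv))
  exact ⟨u, v, hsu, conv_nf_simE hcomp huv (nf_Rddot_nf_R hcomp hdot hddot hnfu)
    (nf_Rddot_nf_R hcomp hdot hddot hnfv), htv⟩

theorem normequiv (hcomp : CompleteMod R B) (hdot : IsRdot R B Rdot)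
    (hddot : Rddot = {q ∈ Rdot | NF (Rew (Rdot \ {q})) q.1}) :
    NormEquivMod R Rddot B := by
  intro s t
  constructor
  · rintro ⟨u, hsu, hnfu, hub⟩
    obtain ⟨w, hsw, hnfw⟩ := exists_nf (term_Rddot_plain hcomp hdot hddot) s
    have hconv : ConvRB R B u w :=
      conv_trans (conv_symm (rtg_rew_conv hsu)) (rtg_Rddot_conv hdot hddot hsw)
    have hsim : simE B u w :=
      conv_nf_simE hcomp hconv hnfu (nf_Rddot_nf_R hcomp hdot hddot hnfw)
    exact ⟨w, hsw, hnfw, EqvGen.trans _ _ _ (EqvGen.symm _ _ hsim) hub⟩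
  · rintro ⟨u, hsu, hnfu, hub⟩
    obtain ⟨w, hsw, hnfw⟩ := exists_nf (term_R_plain hcomp) s
    have hconv : ConvRB R B w u :=
      conv_trans (conv_symm (rtg_rew_conv hsw)) (rtg_Rddot_conv hdot hddot hsu)
    have hsim : simE B w u :=
      conv_nf_simE hcomp hconv hnfw (nf_Rddot_nf_R hcomp hdot hddot hnfu)
    exact ⟨w, hsw, hnfw, EqvGen.trans _ _ _ hsim hub⟩

theorem leftred (hddot : Rddot = {q ∈ Rdot | NF (Rew (Rdot \ {q})) q.1}) :
    LeftReduced Rddot := by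
  intro q hq
  have hq' : q ∈ Rdot ∧ NF (Rew (Rdot \ {q})) q.1 := by rw [hddot] at hq; exact hq
  intro b hb
  exact hq'.2 b (rew_mono (Set.diff_subset_diff_left (Rddot_subset hddot)) hb)

theorem rightred (hdot : IsRdot R B Rdot)
    (hddot : Rddot = {q ∈ Rdot | NF (Rew (Rdot \ {q})) q.1}) :
    RightBReduced Rddot B := by
  intro q hq v hv
  obtain ⟨r₀, _, _, hnf⟩ := hdot.1 q (Rddot_subset hddot hq)
  obtain ⟨x, y, h1, h2, h3⟩ := hv
  have htg : TransGen (RewMod R B) q.2 v :=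
    transGen_simE_right (transGen_simE_left h1
      (rew_Rdot_tg hdot (rew_mono (Rddot_subset hddot) h2))) h3
  obtain ⟨c, hc⟩ := tg_head_ex htg
  exact hnf c hc

theorem convequiv (hcomp : CompleteMod R B) (hdot : IsRdot R B Rdot)
    (hddot : Rddot = {q ∈ Rdot | NF (Rew (Rdot \ {q})) q.1}) :
    ConvEquivMod R Rddot B := by
  intro s t
  constructor
  · intro h
    obtain ⟨u, hsu, hnfu⟩ := exists_nf (term_Rddot_plain hcomp hdot hddot) s
    obtain ⟨v, htv, hnfv⟩ := exists_nf (term_Rddot_plain hcomp hdot hddot) t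
    have huv : ConvRB R B u v :=
      conv_trans (conv_symm (rtg_Rddot_conv hdot hddot hsu))
        (conv_trans h (rtg_Rddot_conv hdot hddot htv))
    have hsim : simE B u v := conv_nf_simE hcomp huv
      (nf_Rddot_nf_R hcomp hdot hddot hnfu) (nf_Rddot_nf_R hcomp hdot hddot hnfv)
    exact conv_trans (rtg_rew_conv hsu)
      (conv_trans (simE_conv hsim) (conv_symm (rtg_rew_conv htv)))
  · intro h
    induction h with
    | rel x y hxy =>
        rcases hxy with h | h
        · exact tgRewMod_conv (rew_Rdot_tg hdot (rew_mono (Rddot_subset hddot) h))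
        · exact conv_of_rewB h
    | refl x => exact EqvGen.refl _
    | symm x y _ ih => exact conv_symm ih
    | trans x y z _ _ ih1 ih2 => exact conv_trans ih1 ih2

end Final


/-- If `R` is `B`-complete then `R̈` is canonical modulo `B` and both
normalization and conversion equivalent modulo `B` to `R`. -/
theorem stmt12 {F : Type} (R B Rdot Rddot : TRS F) (hTRS : IsTRS R)
    (hcomp : CompleteMod R B)
    (hdot : IsRdot R B Rdot)
    (hddot : Rddot = {q ∈ Rdot | NF (Rew (Rdot \ {q})) q.1}) :
    CanonicalMod Rddot B ∧ NormEquivMod R Rddot B ∧ ConvEquivMod R Rddot B := by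
  exact ⟨⟨⟨termMod_Rddot hcomp hdot hddot, cr_Rddot hcomp hdot hddot⟩,
    leftred hddot, rightred hdot hddot⟩,
   normequiv hcomp hdot hddot, convequiv hcomp hdot hddot⟩
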